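/- arXiv:2012.00919 — 7 statements merged into one kernel-verified Lean document; each statement's English description precedes it below -/
import Mathlib

section
/- Let p be a prime and let L be a 3-dimensional unsolvable Lie algebra over Z_p whose underlying module is free of rank 3, admitting a basis (x0,x1,x2) with [x_i, x_{i+1}] = a_{i+2} x_{i+2} (indices mod 3) for nonzero a0,a1,a2 in Z_p. Then every finite-index Z_p-subalgebra M of L is just infinite: every nonzero ideal I of M has finite index in M (equivalently, I spans a 3-dimensional Q_p-subspace). -/
/-!
If `y ≠ 0` has `x i`-coordinate `b ≠ 0`, then
`⁅x i, ⁅x i, y⁆⁆ + (a (i + 1) * a (i + 2)) • y = (a (i + 1) * a (i + 2) * b) • x i`, so an ideal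
containing `y` contains a nonzero multiple of `x i`, and bracketing with `x (i + 2)` turns it into
a nonzero multiple of `x (i + 1)`. A finite-index subalgebra `M` contains `t • L` for some `t ≠ 0`,
so these brackets can be formed inside `M` after scaling by `t`. Hence a nonzero ideal of `M`
contains `e • M` for some `e ≠ 0`, and `M ⧸ e • M` is finite because `ℤ_[p] ⧸ (e)` is.
-/

instance PadicInt.hasFiniteQuotients (p : ℕ) [Fact p.Prime] : Ring.HasFiniteQuotients ℤ_[p] where
  finiteQuotient hs := by
    obtain ⟨n, rfl⟩ := PadicInt.ideal_eq_span_pow_p hs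
    rw [← PadicInt.ker_toZModPow]
    have : NeZero (p ^ n) := ⟨pow_ne_zero n (Fact.out : p.Prime).ne_zero⟩
    exact .of_equiv _
      (RingHom.quotientKerEquivOfSurjective (ZMod.ringHom_surjective _)).toEquiv.symm

theorem Submodule.exists_smul_mem_of_finite_quotient {R M : Type*} [Ring R] [CharZero R]
    [AddCommGroup M] [Module R M] (N : Submodule R M) [Finite (M ⧸ N)] :
    ∃ c : R, c ≠ 0 ∧ ∀ m : M, c • m ∈ N := by
  refine ⟨Nat.card (M ⧸ N), Nat.cast_ne_zero.mpr Nat.card_pos.ne', fun m ↦ ?_⟩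
  rw [← Submodule.Quotient.mk_eq_zero, Submodule.Quotient.mk_smul, Nat.cast_smul_eq_nsmul,
    card_nsmul_eq_zero']

theorem Submodule.finite_quotient_of_smul_mem {R M : Type*} [CommRing R]
    [Ring.HasFiniteQuotients R] [AddCommGroup M] [Module R M] [Module.Finite R M]
    {N : Submodule R M} {c : R} (hc : c ≠ 0) (h : ∀ m : M, c • m ∈ N) : Finite (M ⧸ N) := by
  have : Finite (R ⧸ Ideal.span {c}) :=
    Ring.HasFiniteQuotients.finiteQuotient (by simpa using hc)
  have : Finite (M ⧸ Ideal.span {c} • (⊤ : Submodule R M)) :=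
    Submodule.finite_quotient_smul _ Module.Finite.fg_top
  have hle : Ideal.span {c} • (⊤ : Submodule R M) ≤ N := by
    rw [Submodule.ideal_span_singleton_smul]
    rintro _ ⟨m, -, rfl⟩
    exact h m
  exact .of_surjective _ (Submodule.factor_surjective hle)

theorem Module.Basis.exists_smul_mem_of_forall_exists_smul_mem {ι R M : Type*} [Fintype ι]
    [CommRing R] [IsDomain R] [AddCommGroup M] [Module R M] (b : Module.Basis ι R M)
    {J : Submodule R M} (h : ∀ i, ∃ d : R, d ≠ 0 ∧ d • b i ∈ J) :
    ∃ e : R, e ≠ 0 ∧ ∀ z : M, e • z ∈ J := by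
  choose d hd hdJ using h
  refine ⟨∏ i, d i, Finset.prod_ne_zero_iff.mpr fun i _ ↦ hd i, fun z ↦ ?_⟩
  suffices ⊤ ≤ J.comap ((∏ i, d i) • LinearMap.id) from this Submodule.mem_top
  rw [← b.span_eq, Submodule.span_le]
  rintro _ ⟨i, rfl⟩
  obtain ⟨q, hq⟩ := Finset.dvd_prod_of_mem d (Finset.mem_univ i)
  rw [SetLike.mem_coe, Submodule.mem_comap, LinearMap.smul_apply, LinearMap.id_apply, hq,
    mul_comm, mul_smul]
  exact J.smul_mem _ (hdJ i)

section DiagonalizingBasis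

variable {R L : Type*} [CommRing R] [LieRing L] [LieAlgebra R L]

def IsDiagonalizingBasis (x : Module.Basis (Fin 3) R L) (a : Fin 3 → R) : Prop :=
  ∀ i : Fin 3, ⁅x i, x (i + 1)⁆ = a (i + 2) • x (i + 2)

namespace IsDiagonalizingBasis

variable {x : Module.Basis (Fin 3) R L} {a : Fin 3 → R}

theorem lie_add_two_self (hx : IsDiagonalizingBasis x a) (i : Fin 3) :
    ⁅x (i + 2), x i⁆ = a (i + 1) • x (i + 1) := by
  have h := hx (i + 2)
  rwa [show i + 2 + 1 = i by grind, show i + 2 + 2 = i + 1 by grind] at h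

theorem lie_lie_add_smul (hx : IsDiagonalizingBasis x a) (i : Fin 3) (y : L) :
    ⁅x i, ⁅x i, y⁆⁆ + (a (i + 1) * a (i + 2)) • y = (a (i + 1) * a (i + 2) * x.repr y i) • x i := by
  have hy : y = x.repr y i • x i + x.repr y (i + 1) • x (i + 1) + x.repr y (i + 2) • x (i + 2) := by
    conv_lhs => rw [← x.sum_repr y, ← Equiv.sum_comp (Equiv.addLeft i)]
    simp [Fin.sum_univ_three]
  have h02 : ⁅x i, x (i + 2)⁆ = -(a (i + 1) • x (i + 1)) := by
    rw [← lie_skew, hx.lie_add_two_self]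
  conv_lhs => rw [hy]
  simp only [lie_add, lie_smul, lie_self, hx i, h02, lie_neg, smul_zero, zero_add, smul_neg]
  module

variable [IsDomain R] {t : R} {J : Submodule R L}

theorem exists_smul_basis_mem (ha : ∀ i, a i ≠ 0) (hx : IsDiagonalizingBasis x a) (ht : t ≠ 0)
    (hJ : ∀ j, ∀ z ∈ J, t • ⁅x j, z⁆ ∈ J) (hJ0 : J ≠ ⊥) :
    ∃ i, ∃ d : R, d ≠ 0 ∧ d • x i ∈ J := by
  obtain ⟨y, hyJ, hy0⟩ := Submodule.exists_mem_ne_zero_of_ne_bot hJ0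
  obtain ⟨i, hi⟩ : ∃ i, x.repr y i ≠ 0 := by
    by_contra! h
    exact hy0 (x.repr.map_eq_zero_iff.mp (Finsupp.ext h))
  refine ⟨i, t ^ 2 * (a (i + 1) * a (i + 2) * x.repr y i), by simp [*], ?_⟩
  have key : t • ⁅x i, t • ⁅x i, y⁆⁆ + (t ^ 2 * (a (i + 1) * a (i + 2))) • y
      = (t ^ 2 * (a (i + 1) * a (i + 2) * x.repr y i)) • x i := by
    rw [lie_smul, smul_smul, ← pow_two, mul_smul (t ^ 2) (a _ * a _), ← smul_add,
      hx.lie_lie_add_smul, smul_smul]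
  rw [← key]
  exact J.add_mem (hJ i _ (hJ i y hyJ)) (J.smul_mem _ hyJ)

theorem exists_smul_basis_add_one_mem
    (ha : ∀ i, a i ≠ 0) (hx : IsDiagonalizingBasis x a) (ht : t ≠ 0)
    (hJ : ∀ j, ∀ z ∈ J, t • ⁅x j, z⁆ ∈ J) {j : Fin 3} {d : R} (hd : d ≠ 0) (hdJ : d • x j ∈ J) :
    ∃ d' : R, d' ≠ 0 ∧ d' • x (j + 1) ∈ J := by
  refine ⟨t * d * a (j + 1), by simp [*], ?_⟩
  have h := hJ (j + 2) _ hdJ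
  rwa [lie_smul, hx.lie_add_two_self, smul_smul, smul_smul] at h

theorem forall_exists_smul_basis_mem
    (ha : ∀ i, a i ≠ 0) (hx : IsDiagonalizingBasis x a) (ht : t ≠ 0)
    (hJ : ∀ j, ∀ z ∈ J, t • ⁅x j, z⁆ ∈ J) (hJ0 : J ≠ ⊥) (j : Fin 3) :
    ∃ d : R, d ≠ 0 ∧ d • x j ∈ J := by
  obtain ⟨i, d₀, hd₀, h₀⟩ := hx.exists_smul_basis_mem ha ht hJ hJ0
  obtain ⟨d₁, hd₁, h₁⟩ := hx.exists_smul_basis_add_one_mem ha ht hJ hd₀ h₀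
  obtain ⟨d₂, hd₂, h₂⟩ := hx.exists_smul_basis_add_one_mem ha ht hJ hd₁ h₁
  obtain ⟨k, rfl⟩ : ∃ k, j = i + k := ⟨j - i, by abel⟩
  fin_cases k
  · exact ⟨d₀, hd₀, by simpa using h₀⟩
  · exact ⟨d₁, hd₁, h₁⟩
  · exact ⟨d₂, hd₂, by simpa [add_assoc] using h₂⟩

theorem exists_smul_mem_lieIdeal (ha : ∀ i, a i ≠ 0) (hx : IsDiagonalizingBasis x a)
    {M : LieSubalgebra R L} (ht : t ≠ 0) (htM : ∀ z : L, t • z ∈ M) {I : LieIdeal R M}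
    (hI : I ≠ ⊥) : ∃ e : R, e ≠ 0 ∧ ∀ m : M, e • m ∈ I := by
  set J := (I : Submodule R M).map (M : Submodule R L).subtype
  have hJ : ∀ j, ∀ z ∈ J, t • ⁅x j, z⁆ ∈ J := by
    rintro j _ ⟨w, hw, rfl⟩
    exact ⟨⁅(⟨t • x j, htM _⟩ : M), w⁆, I.lie_mem hw, smul_lie t (x j) (w : L)⟩
  have hJ0 : J ≠ ⊥ := by
    rw [Ne, ← Submodule.map_bot (M : Submodule R L).subtype]
    exact (Submodule.map_injective_of_injective (Submodule.injective_subtype _)).ne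
      (by simpa using hI)
  obtain ⟨e, he, heJ⟩ := x.exists_smul_mem_of_forall_exists_smul_mem
    (hx.forall_exists_smul_basis_mem ha ht hJ hJ0)
  refine ⟨e, he, fun m ↦ ?_⟩
  obtain ⟨w, hw, hwm⟩ := heJ m
  rwa [show w = e • m from Subtype.ext hwm] at hw

end IsDiagonalizingBasis

end DiagonalizingBasis

theorem stmt0_general (p : ℕ) [Fact p.Prime]
    (L : Type*) [LieRing L] [LieAlgebra ℤ_[p] L]
    (x : Module.Basis (Fin 3) ℤ_[p] L) (a : Fin 3 → ℤ_[p]) (ha : ∀ i, a i ≠ 0)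
    (hx : ∀ i : Fin 3, ⁅x i, x (i + 1)⁆ = a (i + 2) • x (i + 2))
    (M : LieSubalgebra ℤ_[p] L)
    (hM : Finite (L ⧸ (M : Submodule ℤ_[p] L)))
    (I : LieIdeal ℤ_[p] M) (hI : I ≠ ⊥) :
    Finite (M ⧸ (I : Submodule ℤ_[p] M)) := by
  have : Module.Finite ℤ_[p] L := .of_basis x
  obtain ⟨t, ht, htM⟩ := (M : Submodule ℤ_[p] L).exists_smul_mem_of_finite_quotient
  obtain ⟨e, he, heI⟩ := IsDiagonalizingBasis.exists_smul_mem_lieIdeal ha hx ht htM hI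
  exact Submodule.finite_quotient_of_smul_mem he heI

/-- A 3-dimensional unsolvable `ℤ_[p]`-Lie lattice admitting a diagonalizing
basis is hereditarily just infinite: every nonzero ideal of a finite-index subalgebra `M`
has finite index in `M`. -/
theorem stmt0 (p : ℕ) [Fact p.Prime]
    (L : Type*) [LieRing L] [LieAlgebra ℤ_[p] L]
    (hus : ¬ LieAlgebra.IsSolvable L)
    (x : Module.Basis (Fin 3) ℤ_[p] L) (a : Fin 3 → ℤ_[p]) (ha : ∀ i, a i ≠ 0)
    (hx : ∀ i : Fin 3, ⁅x i, x (i + 1)⁆ = a (i + 2) • x (i + 2))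
    (M : LieSubalgebra ℤ_[p] L)
    (hM : Finite (L ⧸ (M : Submodule ℤ_[p] L)))
    (I : LieIdeal ℤ_[p] M) (hI : I ≠ ⊥) :
    Finite (M ⧸ (I : Submodule ℤ_[p] M)) :=
  stmt0_general p L x a ha hx M hM I hI
end

section
/- Let L be a hereditarily just-infinite Z_p-Lie lattice and let φ: M → L be a Lie algebra homomorphism from a finite-index subalgebra M of L. If φ is not injective, then there exists a nonzero ideal I of L with I ⊆ M and φ(I) ⊆ I; equivalently, if φ is simple (no nonzero φ-invariant ideal of L exists) then φ is injective. -/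
/-! Since `L` is hereditarily just infinite, the nonzero ideal `ker φ` has finite index in `M`,
so some `n ≠ 0` maps `M` into `ker φ`; as `L` is torsion free, `φ = 0`. Any nonzero ideal of `L`
inside `M` is then `φ`-invariant, and `n • L` is one for `n` the exponent of `L / M`. -/

lemma Submodule.exponent_nsmul_mem {R M : Type*} [Ring R] [AddCommGroup M] [Module R M]
    (K : Submodule R M) (x : M) : AddMonoid.exponent (M ⧸ K) • x ∈ K := by
  rw [← Submodule.Quotient.mk_eq_zero, Submodule.Quotient.mk_smul]
  exact AddMonoid.exponent_nsmul_eq_zero _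

section

variable {R L : Type*} [CommRing R] [LieRing L] [LieAlgebra R L]

lemma LieHom.eq_zero_of_finite_quotient_ker {L' : Type*} [LieRing L'] [LieAlgebra R L']
    [IsAddTorsionFree L'] (φ : L →ₗ⁅R⁆ L') [Finite (L ⧸ (φ.ker : Submodule R L))] : φ = 0 := by
  ext x
  have hφ : φ (AddMonoid.exponent (L ⧸ (φ.ker : Submodule R L)) • x) = 0 :=
    LieHom.mem_ker.mp (Submodule.exponent_nsmul_mem _ x)
  rw [map_nsmul] at hφ
  exact nsmul_right_injective AddMonoid.exponent_ne_zero_of_finite (hφ.trans (nsmul_zero _).symm)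

variable (R) in
def LieIdeal.nsmulTop (n : ℕ) : LieIdeal R L :=
  (n • LieModuleHom.id : L →ₗ⁅R,L⁆ L).range

lemma LieIdeal.mem_nsmulTop {n : ℕ} {y : L} : y ∈ LieIdeal.nsmulTop R n ↔ ∃ x : L, n • x = y :=
  LieModuleHom.mem_range _ y

lemma LieIdeal.nsmulTop_ne_bot [Nontrivial L] [IsAddTorsionFree L] {n : ℕ} (hn : n ≠ 0) :
    LieIdeal.nsmulTop R n ≠ (⊥ : LieIdeal R L) := by
  obtain ⟨x, hx⟩ := exists_ne (0 : L)
  intro h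
  have hnx : n • x ∈ (⊥ : LieIdeal R L) := h ▸ LieIdeal.mem_nsmulTop.mpr ⟨x, rfl⟩
  exact hx (nsmul_right_injective hn ((LieSubmodule.mem_bot _).mp hnx |>.trans (nsmul_zero _).symm))

lemma LieSubalgebra.exists_lieIdeal_ne_bot_le [Nontrivial L] [IsAddTorsionFree L]
    (M : LieSubalgebra R L) [Finite (L ⧸ (M : Submodule R L))] :
    ∃ I : LieIdeal R L, I ≠ ⊥ ∧ ∀ y ∈ I, y ∈ M := by
  refine ⟨LieIdeal.nsmulTop R (AddMonoid.exponent (L ⧸ (M : Submodule R L))),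
    LieIdeal.nsmulTop_ne_bot AddMonoid.exponent_ne_zero_of_finite, fun y hy => ?_⟩
  obtain ⟨x, rfl⟩ := LieIdeal.mem_nsmulTop.mp hy
  exact Submodule.exponent_nsmul_mem (M : Submodule R L) x

end

theorem stmt1_general (p : ℕ) [Fact p.Prime]
    (L : Type*) [LieRing L] [LieAlgebra ℤ_[p] L] [Module.Free ℤ_[p] L]
    (hInf : Infinite L)
    -- hereditarily just infinite: every finite-index subalgebra is just infinite
    (hhji : ∀ N : LieSubalgebra ℤ_[p] L, Finite (L ⧸ (N : Submodule ℤ_[p] L)) →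
      ∀ J : LieIdeal ℤ_[p] N, J ≠ ⊥ → Finite (N ⧸ (J : Submodule ℤ_[p] N)))
    (M : LieSubalgebra ℤ_[p] L)
    (hM : Finite (L ⧸ (M : Submodule ℤ_[p] L)))
    (φ : M →ₗ⁅ℤ_[p]⁆ L)
    (hφ : ¬ Function.Injective φ) :
    ∃ I : LieIdeal ℤ_[p] L, I ≠ ⊥ ∧
      ∃ hIM : ∀ y ∈ I, y ∈ M, ∀ y (hy : y ∈ I), φ ⟨y, hIM y hy⟩ ∈ I := by
  have : IsAddTorsionFree L := .of_isTorsionFree ℤ_[p] L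
  have hker : φ.ker ≠ ⊥ := fun h => hφ ((LieHom.ker_eq_bot φ).mp h)
  have : Finite (M ⧸ (φ.ker : Submodule ℤ_[p] M)) := hhji M hM φ.ker hker
  have hφ0 : φ = 0 := φ.eq_zero_of_finite_quotient_ker
  obtain ⟨I, hI, hIM⟩ := M.exists_lieIdeal_ne_bot_le
  exact ⟨I, hI, hIM, fun y _ => by simp [hφ0]⟩

/-- If `L` is a hereditarily just-infinite `ℤ_[p]`-Lie lattice and
`φ : M → L` is a non-injective virtual endomorphism (with `M` of finite index in `L`),
then there is a nonzero ideal `I` of `L` with `I ⊆ M` and `φ(I) ⊆ I`; equivalently,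
a simple virtual endomorphism is injective. -/
theorem stmt1 (p : ℕ) [Fact p.Prime]
    (L : Type*) [LieRing L] [LieAlgebra ℤ_[p] L] [Module.Free ℤ_[p] L] [Module.Finite ℤ_[p] L]
    (hInf : Infinite L)
    -- hereditarily just infinite: every finite-index subalgebra is just infinite
    (hhji : ∀ N : LieSubalgebra ℤ_[p] L, Finite (L ⧸ (N : Submodule ℤ_[p] L)) →
      ∀ J : LieIdeal ℤ_[p] N, J ≠ ⊥ → Finite (N ⧸ (J : Submodule ℤ_[p] N)))
    (M : LieSubalgebra ℤ_[p] L)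
    (hM : Finite (L ⧸ (M : Submodule ℤ_[p] L)))
    (φ : M →ₗ⁅ℤ_[p]⁆ L)
    (hφ : ¬ Function.Injective φ) :
    ∃ I : LieIdeal ℤ_[p] L, I ≠ ⊥ ∧
      ∃ hIM : ∀ y ∈ I, y ∈ M, ∀ y (hy : y ∈ I), φ ⟨y, hIM y hy⟩ ∈ I :=
  stmt1_general p L hInf hhji M hM φ hφ
end

section
/- Let L be a 3-dimensional unsolvable Z_p-Lie lattice with a basis (x0,x1,x2) satisfying [x_i,x_{i+1}] = a_{i+2} x_{i+2} (indices mod 3) with a_i ∈ Z_p \ {0}, and set s_i = v_p(a_i). For natural numbers m0, m1, m2, the submodule I = ⟨p^{m0} x0, p^{m1} x1, p^{m2} x2⟩ is an ideal of L if and only if m_i + s_j ≥ m_j for all i, j ∈ {0,1,2}. -/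
/-! The bracket of a basis vector with a generator `p ^ m k • x k` of `I` is `0` or
`± (p ^ m k * a j) • x j`, `j` being the third index. Since the bracket is bilinear, `I` is an
ideal iff all these lie in `I`, i.e. iff `p ^ m j ∣ p ^ m k * a j` for all `j, k`, which in `ℤ_[p]`
reads `m j ≤ m k + v_p (a j)`. -/

open Submodule

theorem Submodule.lie_mem_of_forall_lie_mem {R L : Type*} [CommRing R] [LieRing L]
    [LieAlgebra R L] {T S : Set L} (hT : span R T = ⊤) {N : Submodule R L}
    (h : ∀ t ∈ T, ∀ g ∈ S, ⁅t, g⁆ ∈ N) (y : L) {z : L} (hz : z ∈ span R S) : ⁅y, z⁆ ∈ N := by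
  have hle : map₂ (LieModule.toEnd R L L : L →ₗ[R] Module.End R L) (span R T) (span R S) ≤ N := by
    rw [map₂_span_span, span_le]
    rintro _ ⟨t, ht, g, hg, rfl⟩
    exact h t ht g hg
  exact hle (apply_mem_map₂ _ (hT ▸ mem_top) hz)

theorem Module.Basis.mem_span_range_smul_iff {ι R M : Type*} [Fintype ι] [CommRing R]
    [AddCommGroup M] [Module R M] (b : Module.Basis ι R M) (c : ι → R) (y : M) :
    y ∈ span R (Set.range fun i ↦ c i • b i) ↔ ∀ i, c i ∣ b.repr y i := by
  rw [mem_span_range_iff_exists_fun]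
  constructor
  · rintro ⟨d, rfl⟩ i
    simp_rw [smul_smul]
    rw [b.repr_sum_self]
    exact dvd_mul_left _ _
  · intro h
    choose d hd using h
    refine ⟨d, ?_⟩
    conv_rhs => rw [← b.sum_repr y]
    simp_rw [smul_smul, hd, mul_comm]

theorem Module.Basis.smul_mem_span_range_smul_iff {ι R M : Type*} [Fintype ι] [DecidableEq ι]
    [CommRing R] [AddCommGroup M] [Module R M] (b : Module.Basis ι R M) (c : ι → R) (d : R)
    (j : ι) : d • b j ∈ span R (Set.range fun i ↦ c i • b i) ↔ c j ∣ d := by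
  rw [b.mem_span_range_smul_iff]
  refine ⟨fun h ↦ by simpa using h j, fun h i ↦ ?_⟩
  rcases eq_or_ne i j with rfl | hij
  · simpa using h
  · simp [hij.symm]

theorem PadicInt.pow_dvd_pow_mul_iff {p : ℕ} [Fact p.Prime] {a : ℤ_[p]} (ha : a ≠ 0)
    (n k : ℕ) : (p : ℤ_[p]) ^ n ∣ (p : ℤ_[p]) ^ k * a ↔ n ≤ k + a.valuation := by
  rw [← Ideal.mem_span_singleton, mem_span_pow_iff_le_valuation _
    (mul_ne_zero (pow_ne_zero _ (NeZero.ne _)) ha), valuation_p_pow_mul _ _ ha]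

theorem Fin.three_cases (i k : Fin 3) :
    k = i ∨ ∃ j, (i = j + 1 ∧ k = j + 2) ∨ (i = j + 2 ∧ k = j + 1) := by
  decide +revert

section CyclicLieAlgebra

variable {R L : Type*} [CommRing R] [LieRing L] [LieAlgebra R L]
  {x : Module.Basis (Fin 3) R L} {a : Fin 3 → R}

theorem lie_basis_add_one_add_two (hx : ∀ i : Fin 3, ⁅x i, x (i + 1)⁆ = a (i + 2) • x (i + 2))
    (j : Fin 3) : ⁅x (j + 1), x (j + 2)⁆ = a j • x j := by
  simpa [add_assoc] using hx (j + 1)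

theorem lie_basis_add_two_add_one (hx : ∀ i : Fin 3, ⁅x i, x (i + 1)⁆ = a (i + 2) • x (i + 2))
    (j : Fin 3) : ⁅x (j + 2), x (j + 1)⁆ = -(a j • x j) := by
  rw [← lie_skew, lie_basis_add_one_add_two hx]

theorem forall_lie_mem_span_smul_basis_iff
    (hx : ∀ i : Fin 3, ⁅x i, x (i + 1)⁆ = a (i + 2) • x (i + 2)) (c : Fin 3 → R) :
    (∀ y : L, ∀ z ∈ span R (Set.range fun i ↦ c i • x i),
        ⁅y, z⁆ ∈ span R (Set.range fun i ↦ c i • x i)) ↔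
      ∀ j k, c j ∣ c k * a j := by
  have h₁ (j : Fin 3) : ⁅x (j + 1), c (j + 2) • x (j + 2)⁆ = (c (j + 2) * a j) • x j := by
    rw [lie_smul, lie_basis_add_one_add_two hx, smul_smul]
  have h₂ (j : Fin 3) : ⁅x (j + 2), c (j + 1) • x (j + 1)⁆ = -(c (j + 1) * a j) • x j := by
    rw [lie_smul, lie_basis_add_two_add_one hx, smul_neg, smul_smul, neg_smul]
  constructor
  · intro hI j k
    have hgen (i : Fin 3) : c i • x i ∈ span R (Set.range fun i ↦ c i • x i) :=
      subset_span ⟨i, rfl⟩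
    obtain rfl | rfl | rfl : k = j ∨ k = j + 1 ∨ k = j + 2 := by decide +revert
    · exact dvd_mul_right _ _
    · simpa [h₂, x.smul_mem_span_range_smul_iff] using hI (x (j + 2)) _ (hgen (j + 1))
    · simpa [h₁, x.smul_mem_span_range_smul_iff] using hI (x (j + 1)) _ (hgen (j + 2))
  · intro hdvd
    refine lie_mem_of_forall_lie_mem x.span_eq ?_
    rintro _ ⟨i, rfl⟩ _ ⟨k, rfl⟩
    rcases Fin.three_cases i k with rfl | ⟨j, ⟨rfl, rfl⟩ | ⟨rfl, rfl⟩⟩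
    · simp
    · rw [h₁, x.smul_mem_span_range_smul_iff]
      exact hdvd j (j + 2)
    · rw [h₂, x.smul_mem_span_range_smul_iff, dvd_neg]
      exact hdvd j (j + 1)

end CyclicLieAlgebra

theorem stmt2_general (p : ℕ) [Fact p.Prime]
    (L : Type*) [LieRing L] [LieAlgebra ℤ_[p] L]
    (x : Module.Basis (Fin 3) ℤ_[p] L) (a : Fin 3 → ℤ_[p]) (ha : ∀ i, a i ≠ 0)
    (hx : ∀ i : Fin 3, ⁅x i, x (i + 1)⁆ = a (i + 2) • x (i + 2))
    (s : Fin 3 → ℕ) (hs : ∀ i, (s i : ℤ) = (a i : ℚ_[p]).valuation)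
    (m : Fin 3 → ℕ)
    (I : Submodule ℤ_[p] L)
    (hI : I = Submodule.span ℤ_[p]
      {y | ∃ i : Fin 3, y = (p : ℤ_[p]) ^ (m i) • x i}) :
    (∀ y : L, ∀ z ∈ I, ⁅y, z⁆ ∈ I) ↔ (∀ i j : Fin 3, m i + s j ≥ m j) := by
  have hval (i : Fin 3) : (a i).valuation = s i := by
    exact_mod_cast ((PadicInt.valuation_coe (a i)).symm.trans (hs i).symm)
  have hgens : {y | ∃ i : Fin 3, y = (p : ℤ_[p]) ^ (m i) • x i} =
      Set.range fun i ↦ (p : ℤ_[p]) ^ (m i) • x i := by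
    ext; simp [eq_comm]
  rw [hI, hgens, forall_lie_mem_span_smul_basis_iff hx, forall_comm]
  simp only [PadicInt.pow_dvd_pow_mul_iff (ha _), hval, ge_iff_le]

/-- For a diagonalized 3-dimensional unsolvable `ℤ_[p]`-Lie lattice with
structure constants `a i` of valuation `s i`, the submodule
`I = ⟨p^{m 0} x 0, p^{m 1} x 1, p^{m 2} x 2⟩` is an ideal of `L` if and only if
`m i + s j ≥ m j` for all `i j`. -/
theorem stmt2 (p : ℕ) [Fact p.Prime]
    (L : Type*) [LieRing L] [LieAlgebra ℤ_[p] L]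
    (hus : ¬ LieAlgebra.IsSolvable L)
    (x : Module.Basis (Fin 3) ℤ_[p] L) (a : Fin 3 → ℤ_[p]) (ha : ∀ i, a i ≠ 0)
    (hx : ∀ i : Fin 3, ⁅x i, x (i + 1)⁆ = a (i + 2) • x (i + 2))
    (s : Fin 3 → ℕ) (hs : ∀ i, (s i : ℤ) = (a i : ℚ_[p]).valuation)
    (m : Fin 3 → ℕ)
    (I : Submodule ℤ_[p] L)
    (hI : I = Submodule.span ℤ_[p]
      {y | ∃ i : Fin 3, y = (p : ℤ_[p]) ^ (m i) • x i}) :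
    (∀ y : L, ∀ z ∈ I, ⁅y, z⁆ ∈ I) ↔ (∀ i j : Fin 3, m i + s j ≥ m j) :=
  stmt2_general p L x a ha hx s hs m I hI
end

section
/- Fix a prime p and l ∈ ℕ. The Z_p-Lie lattice L_l on Z_p³ with bracket [x1,x2] = p² x0, [x2,x0] = p^{2l+2} x1, [x0,x1] = −p^{4l+2} x2 (for the canonical basis) satisfies the Jacobi identity, is powerful (i.e., [L,L] ⊆ pL for p ≥ 3, resp. [L,L] ⊆ 4L for p = 2, both of which follow from [L,L] ⊆ p²L, which holds here), and is unsolvable (its derived series does not terminate at 0); moreover its abelianization L_l/[L_l,L_l] is isomorphic to Z/p²Z ⊕ Z/p^{2l+2}Z ⊕ Z/p^{4l+2}Z. -/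
lemma stmt6_sum_lie {L : Type*} [LieRing L] {ι : Type*} (s : Finset ι) (f : ι → L) (v : L) :
    ⁅∑ i ∈ s, f i, v⁆ = ∑ i ∈ s, ⁅f i, v⁆ :=
  map_sum (AddMonoidHom.mk' (fun u => ⁅u, v⁆) fun a b => add_lie a b v) f s

lemma stmt6_lie_sum {L : Type*} [LieRing L] {ι : Type*} (s : Finset ι) (f : ι → L) (v : L) :
    ⁅v, ∑ i ∈ s, f i⁆ = ∑ i ∈ s, ⁅v, f i⁆ :=
  map_sum (AddMonoidHom.mk' (fun u => ⁅v, u⁆) fun a b => lie_add v a b) f s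

lemma stmt6_lie_expand {R L : Type*} [CommRing R] [LieRing L] [LieAlgebra R L]
    (x : Module.Basis (Fin 3) R L) (u v : L) :
    ⁅u, v⁆ = ∑ i : Fin 3, ∑ j : Fin 3, (x.repr u i * x.repr v j) • ⁅x i, x j⁆ := by
  conv_lhs => rw [← x.sum_repr u, ← x.sum_repr v]
  rw [stmt6_sum_lie]
  refine Finset.sum_congr rfl fun i _ => ?_
  rw [stmt6_lie_sum]
  refine Finset.sum_congr rfl fun j _ => ?_
  rw [smul_lie, lie_smul, smul_smul]

lemma stmt6_lie_mem {R L : Type*} [CommRing R] [LieRing L] [LieAlgebra R L]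
    (x : Module.Basis (Fin 3) R L) (T : Submodule R L) (h : ∀ i j, ⁅x i, x j⁆ ∈ T) (u v : L) :
    ⁅u, v⁆ ∈ T := by
  rw [stmt6_lie_expand x]
  exact Submodule.sum_mem _ fun i _ => Submodule.sum_mem _ fun j _ =>
    Submodule.smul_mem _ _ (h i j)

set_option maxHeartbeats 1000000 in
/-- the bracket of `L_l` satisfies the Jacobi identity; `L_l` is powerful
(`[L,L] ⊆ p²L`), unsolvable, and its abelianization is
`ℤ/p²ℤ ⊕ ℤ/p^{2l+2}ℤ ⊕ ℤ/p^{4l+2}ℤ`. -/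
theorem stmt6 (p : ℕ) [Fact p.Prime] (l : ℕ)
    -- the concrete bracket on ℤ_[p]³ determined by the stated relations
    (br : (Fin 3 → ℤ_[p]) → (Fin 3 → ℤ_[p]) → (Fin 3 → ℤ_[p]))
    (hbr : ∀ u v, br u v =
      ![(p : ℤ_[p]) ^ 2 * (u 1 * v 2 - u 2 * v 1),
        (p : ℤ_[p]) ^ (2 * l + 2) * (u 2 * v 0 - u 0 * v 2),
        -((p : ℤ_[p]) ^ (4 * l + 2) * (u 0 * v 1 - u 1 * v 0))])
    -- an abstract model of L_l: a ℤ_[p]-Lie algebra with a basis satisfying the relations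
    (L : Type*) [LieRing L] [LieAlgebra ℤ_[p] L]
    (x : Module.Basis (Fin 3) ℤ_[p] L)
    (h12 : ⁅x 1, x 2⁆ = ((p : ℤ_[p]) ^ 2) • x 0)
    (h20 : ⁅x 2, x 0⁆ = ((p : ℤ_[p]) ^ (2 * l + 2)) • x 1)
    (h01 : ⁅x 0, x 1⁆ = -(((p : ℤ_[p]) ^ (4 * l + 2)) • x 2)) :
    -- Jacobi identity for the concrete bracket
    (∀ u v w, br u (br v w) + br v (br w u) + br w (br u v) = 0) ∧
    -- powerful: [L,L] ⊆ p^ε L with ε = 1 for p ≥ 3; here even [L,L] ⊆ p²L for every p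
    (∀ u v : L, ∃ w : L, ⁅u, v⁆ = ((p : ℤ_[p]) ^ 2) • w) ∧
    -- unsolvable
    (¬ LieAlgebra.IsSolvable L) ∧
    -- abelianization
    Nonempty ((L ⧸ (⁅(⊤ : LieIdeal ℤ_[p] L), (⊤ : LieIdeal ℤ_[p] L)⁆ : LieIdeal ℤ_[p] L)) ≃+
      (ZMod (p ^ 2) × ZMod (p ^ (2 * l + 2)) × ZMod (p ^ (4 * l + 2)))) := by
  -- the remaining brackets of basis vectors
  have h21 : ⁅x 2, x 1⁆ = -(((p : ℤ_[p]) ^ 2) • x 0) := by rw [← lie_skew, h12]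
  have h02 : ⁅x 0, x 2⁆ = -(((p : ℤ_[p]) ^ (2 * l + 2)) • x 1) := by rw [← lie_skew, h20]
  have h10 : ⁅x 1, x 0⁆ = ((p : ℤ_[p]) ^ (4 * l + 2)) • x 2 := by
    rw [← lie_skew, h01, neg_neg]
  refine ⟨?_, ?_, ?_, ?_⟩
  · -- Jacobi
    intro u v w
    funext i
    fin_cases i <;>
      simp only [hbr, Fin.zero_eta, Fin.mk_one, Fin.isValue, Matrix.cons_val_zero,
        Matrix.cons_val_one, Matrix.head_cons, Matrix.cons_val_two, Matrix.tail_cons,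
        Pi.add_apply, Pi.zero_apply, Fin.reduceFinMk] <;> ring
  · -- powerful
    intro u v
    have hmem : ⁅u, v⁆ ∈ LinearMap.range (((p : ℤ_[p]) ^ 2) • (LinearMap.id : L →ₗ[ℤ_[p]] L)) := by
      refine stmt6_lie_mem x _ (fun i j => ?_) u v
      fin_cases i <;> fin_cases j <;>
        simp only [Fin.zero_eta, Fin.mk_one, Fin.reduceFinMk, Fin.isValue, lie_self,
          h12, h20, h01, h21, h02, h10, LinearMap.mem_range, LinearMap.smul_apply,
          LinearMap.id_apply]
      · exact ⟨0, by simp⟩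
      · exact ⟨-(((p : ℤ_[p]) ^ (4 * l)) • x 2), by
          rw [smul_neg, smul_smul, ← pow_add]; ring_nf⟩
      · exact ⟨-(((p : ℤ_[p]) ^ (2 * l)) • x 1), by
          rw [smul_neg, smul_smul, ← pow_add]; ring_nf⟩
      · exact ⟨((p : ℤ_[p]) ^ (4 * l)) • x 2, by rw [smul_smul, ← pow_add]; ring_nf⟩
      · exact ⟨0, by simp⟩
      · exact ⟨x 0, rfl⟩
      · exact ⟨((p : ℤ_[p]) ^ (2 * l)) • x 1, by rw [smul_smul, ← pow_add]; ring_nf⟩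
      · exact ⟨-(x 0), by simp⟩
      · exact ⟨0, by simp⟩
    obtain ⟨w, hw⟩ := hmem
    exact ⟨w, by simpa using hw.symm⟩
  · -- unsolvable
    have hsm : ∀ (a s : ℕ) (y : L),
        (p : ℤ_[p]) ^ a • ((p : ℤ_[p]) ^ s • y) = (p : ℤ_[p]) ^ (a + s) • y := by
      intro a s y; rw [smul_smul, ← pow_add]
    have key : ∀ n, ∃ a b c : ℕ,
        ((p : ℤ_[p]) ^ a • x 0 ∈ LieAlgebra.derivedSeries ℤ_[p] L n) ∧
        ((p : ℤ_[p]) ^ b • x 1 ∈ LieAlgebra.derivedSeries ℤ_[p] L n) ∧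
        ((p : ℤ_[p]) ^ c • x 2 ∈ LieAlgebra.derivedSeries ℤ_[p] L n) := by
      intro n
      induction n with
      | zero =>
        exact ⟨0, 0, 0, LieSubmodule.mem_top _, LieSubmodule.mem_top _, LieSubmodule.mem_top _⟩
      | succ n ih =>
        obtain ⟨a, b, c, ha, hb, hc⟩ := ih
        refine ⟨b + c + 2, c + a + (2 * l + 2), a + b + (4 * l + 2), ?_, ?_, ?_⟩
        · have h := LieSubmodule.lie_mem_lie hb hc
          rw [smul_lie, lie_smul, h12, hsm, hsm] at h
          rw [LieAlgebra.derivedSeries_def, LieAlgebra.derivedSeriesOfIdeal_succ]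
          exact h
        · have h := LieSubmodule.lie_mem_lie hc ha
          rw [smul_lie, lie_smul, h20, hsm, hsm] at h
          rw [LieAlgebra.derivedSeries_def, LieAlgebra.derivedSeriesOfIdeal_succ]
          exact h
        · have h := LieSubmodule.lie_mem_lie ha hb
          rw [smul_lie, lie_smul, h01, smul_neg, smul_neg, hsm, hsm] at h
          rw [LieAlgebra.derivedSeries_def, LieAlgebra.derivedSeriesOfIdeal_succ]
          exact (neg_mem_iff).mp h
    intro hs
    obtain ⟨k, hk⟩ := (LieAlgebra.isSolvable_iff ℤ_[p] L).mp hs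
    obtain ⟨a, b, c, ha, -, -⟩ := key k
    rw [hk, LieSubmodule.mem_bot] at ha
    have h1 : x.repr ((p : ℤ_[p]) ^ a • x 0) 0 = (p : ℤ_[p]) ^ a := by
      simp [Module.Basis.repr_self]
    rw [ha] at h1
    simp only [map_zero, Finsupp.coe_zero, Pi.zero_apply] at h1
    exact pow_ne_zero a (Nat.cast_ne_zero.mpr (Fact.out : p.Prime).pos.ne')
      h1.symm
  · -- abelianization
    letI m0 : Module ℤ_[p] (ZMod (p ^ 2)) := (PadicInt.toZModPow 2).toModule
    letI m1 : Module ℤ_[p] (ZMod (p ^ (2 * l + 2))) := (PadicInt.toZModPow (2 * l + 2)).toModule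
    letI m2 : Module ℤ_[p] (ZMod (p ^ (4 * l + 2))) := (PadicInt.toZModPow (4 * l + 2)).toModule
    have hzsurj : ∀ n : ℕ, Function.Surjective (PadicInt.toZModPow (p := p) n) := by
      intro n z
      haveI : NeZero (p ^ n) := ⟨pow_ne_zero n (Fact.out : p.Prime).pos.ne'⟩
      refine ⟨((z.val : ℕ) : ℤ_[p]), ?_⟩
      rw [map_natCast]
      exact ZMod.natCast_rightInverse z
    have hz0 : ∀ n : ℕ, PadicInt.toZModPow (p := p) n ((p : ℤ_[p]) ^ n) = 0 := by
      intro n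
      rw [← Nat.cast_pow, map_natCast, ZMod.natCast_self]
    let f : L →ₗ[ℤ_[p]] (ZMod (p ^ 2) × ZMod (p ^ (2 * l + 2)) × ZMod (p ^ (4 * l + 2))) :=
      { toFun := fun u => (PadicInt.toZModPow 2 (x.repr u 0),
          PadicInt.toZModPow (2 * l + 2) (x.repr u 1),
          PadicInt.toZModPow (4 * l + 2) (x.repr u 2)),
        map_add' := fun a b => by simp [Prod.ext_iff]
        map_smul' := fun r a => by
          simp only [map_smul, Finsupp.smul_apply, smul_eq_mul, map_mul, RingHom.id_apply]
          rfl }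
    have hfsurj : Function.Surjective f := by
      rintro ⟨a, b, c⟩
      obtain ⟨ra, hra⟩ := hzsurj 2 a
      obtain ⟨rb, hrb⟩ := hzsurj (2 * l + 2) b
      obtain ⟨rc, hrc⟩ := hzsurj (4 * l + 2) c
      refine ⟨ra • x 0 + rb • x 1 + rc • x 2, ?_⟩
      have h0 : x.repr (ra • x 0 + rb • x 1 + rc • x 2) 0 = ra := by
        simp [Module.Basis.repr_self, Finsupp.single_apply]
      have h1 : x.repr (ra • x 0 + rb • x 1 + rc • x 2) 1 = rb := by
        simp [Module.Basis.repr_self, Finsupp.single_apply]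
      have h2 : x.repr (ra • x 0 + rb • x 1 + rc • x 2) 2 = rc := by
        simp [Module.Basis.repr_self, Finsupp.single_apply]
      show (PadicInt.toZModPow 2 (x.repr _ 0), PadicInt.toZModPow (2 * l + 2) (x.repr _ 1),
        PadicInt.toZModPow (4 * l + 2) (x.repr _ 2)) = (a, b, c)
      rw [h0, h1, h2, hra, hrb, hrc]
    have hfval : ∀ u : L, f u = (PadicInt.toZModPow 2 (x.repr u 0),
        PadicInt.toZModPow (2 * l + 2) (x.repr u 1),
        PadicInt.toZModPow (4 * l + 2) (x.repr u 2)) := fun u => rfl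
    have hrep : ∀ (c : ℤ_[p]) (k i : Fin 3), x.repr (c • x k) i = if k = i then c else 0 := by
      intro c k i
      rw [map_smul, Finsupp.smul_apply, Module.Basis.repr_self, Finsupp.single_apply]
      split <;> simp
    have hg12 : f ⁅x 1, x 2⁆ = 0 := by
      rw [h12, hfval]
      simp [hrep, hz0, Prod.ext_iff]
    have hg20 : f ⁅x 2, x 0⁆ = 0 := by
      rw [h20, hfval]
      simp [hrep, hz0, Prod.ext_iff]
    have hg10 : f ⁅x 1, x 0⁆ = 0 := by
      rw [h10, hfval]
      simp [hrep, hz0, Prod.ext_iff]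
    have hneg : ∀ a b : L, f ⁅a, b⁆ = - f ⁅b, a⁆ := by
      intro a b
      rw [← lie_skew, map_neg]
    have hbk : ∀ i j, ⁅x i, x j⁆ ∈ LinearMap.ker f := by
      intro i j
      rw [LinearMap.mem_ker]
      fin_cases i <;> fin_cases j
      · simp
      · rw [hneg]; exact neg_eq_zero.mpr hg10
      · rw [hneg]; exact neg_eq_zero.mpr hg20
      · exact hg10
      · simp
      · exact hg12
      · exact hg20
      · rw [hneg]; exact neg_eq_zero.mpr hg12
      · simp
    have hker : (LieSubmodule.toSubmodule
        (⁅(⊤ : LieIdeal ℤ_[p] L), (⊤ : LieIdeal ℤ_[p] L)⁆ : LieIdeal ℤ_[p] L)) =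
        LinearMap.ker f := by
      apply le_antisymm
      · rw [LieSubmodule.lieIdeal_oper_eq_linear_span', Submodule.span_le]
        rintro m ⟨u, -, v, -, rfl⟩
        exact stmt6_lie_mem x _ hbk u v
      · intro u hu
        rw [LinearMap.mem_ker] at hu
        obtain ⟨hu0, hu1, hu2⟩ : PadicInt.toZModPow 2 (x.repr u 0) = 0 ∧
            PadicInt.toZModPow (2 * l + 2) (x.repr u 1) = 0 ∧
            PadicInt.toZModPow (4 * l + 2) (x.repr u 2) = 0 := by
          simpa [hfval, Prod.ext_iff] using hu
        have d0 : ((p : ℤ_[p]) ^ 2) ∣ x.repr u 0 := by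
          rw [← Ideal.mem_span_singleton, ← PadicInt.ker_toZModPow, RingHom.mem_ker]
          exact hu0
        have d1 : ((p : ℤ_[p]) ^ (2 * l + 2)) ∣ x.repr u 1 := by
          rw [← Ideal.mem_span_singleton, ← PadicInt.ker_toZModPow, RingHom.mem_ker]
          exact hu1
        have d2 : ((p : ℤ_[p]) ^ (4 * l + 2)) ∣ x.repr u 2 := by
          rw [← Ideal.mem_span_singleton, ← PadicInt.ker_toZModPow, RingHom.mem_ker]
          exact hu2
        obtain ⟨c0, hc0⟩ := d0
        obtain ⟨c1, hc1⟩ := d1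
        obtain ⟨c2, hc2⟩ := d2
        have hmem : ∀ a b : L, ⁅a, b⁆ ∈ LieSubmodule.toSubmodule
            (⁅(⊤ : LieIdeal ℤ_[p] L), (⊤ : LieIdeal ℤ_[p] L)⁆ : LieIdeal ℤ_[p] L) :=
          fun a b => (LieSubmodule.mem_toSubmodule _).mpr
            (LieSubmodule.lie_mem_lie (LieSubmodule.mem_top a) (LieSubmodule.mem_top b))
        have hu' : u = c0 • ⁅x 1, x 2⁆ + c1 • ⁅x 2, x 0⁆ + c2 • ⁅x 1, x 0⁆ := by
          rw [h12, h20, h10]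
          conv_lhs => rw [← x.sum_repr u]
          rw [Fin.sum_univ_three, hc0, hc1, hc2, smul_smul, smul_smul, smul_smul,
            mul_comm c0, mul_comm c1, mul_comm c2]
        rw [hu']
        exact Submodule.add_mem _ (Submodule.add_mem _
          (Submodule.smul_mem _ _ (hmem _ _)) (Submodule.smul_mem _ _ (hmem _ _)))
          (Submodule.smul_mem _ _ (hmem _ _))
    exact ⟨((Submodule.quotEquivOfEq _ _ hker).trans
      (f.quotKerEquivOfSurjective hfsurj)).toAddEquiv⟩
end

section
/- Let p be a prime and L a 3-dimensional unsolvable Z_p-Lie lattice with a basis (x0,x1,x2) satisfying [x_i,x_{i+1}] = a_{i+2}x_{i+2} (indices mod 3) with v_p(a0) ≤ v_p(a1) ≤ v_p(a2). Then the abelianization L/[L,L] is isomorphic as an abelian group to Z/p^{s0}Z ⊕ Z/p^{s1}Z ⊕ Z/p^{s2}Z, where s_i = v_p(a_i). -/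
/-!
In the basis `x`, the derived algebra `[L, L]` is spanned by the brackets `[x i, x (i + 1)]`,
i.e. by the vectors `a i • x i`. So `L / [L, L]` is the cokernel of a diagonal matrix
`diag (a 0, a 1, a 2)`, namely `∏ ℤ_p / (a i)`, and `ℤ_p / (a) = ℤ/p^{v(a)}` since `a` is
`p ^ v(a)` times a unit.
-/

open Submodule

namespace Module.Basis

variable {ι R M : Type*} [CommRing R] [AddCommGroup M] [Module R M] [Fintype ι]

theorem map_equivFun_span_range_smul (b : Basis ι R M) (a : ι → R) :
    (span R (Set.range fun i => a i • b i)).map (b.equivFun : M →ₗ[R] ι → R) =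
      pi Set.univ fun i => Ideal.span {a i} := by
  ext f
  simp only [mem_map, mem_span_range_iff_exists_fun, mem_pi, Set.mem_univ, true_implies,
    Ideal.mem_span_singleton]
  constructor
  · rintro ⟨_, ⟨c, rfl⟩, rfl⟩ i
    exact ⟨c i, by simp only [smul_smul, LinearEquiv.coe_coe, equivFun_apply, repr_sum_self,
      mul_comm]⟩
  · intro h
    choose c hc using h
    refine ⟨∑ i, c i • a i • b i, ⟨c, rfl⟩, funext fun i => ?_⟩
    simp only [smul_smul, LinearEquiv.coe_coe, equivFun_apply, repr_sum_self, hc, mul_comm]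

noncomputable def quotientSpanRangeSmulEquivPi [DecidableEq ι] (b : Basis ι R M) (a : ι → R) :
    (M ⧸ span R (Set.range fun i => a i • b i)) ≃ₗ[R] Π i, R ⧸ Ideal.span {a i} :=
  (Quotient.equiv _ _ b.equivFun (b.map_equivFun_span_range_smul a)).trans (quotientPi _)

end Module.Basis

namespace LieAlgebra

variable {R L : Type*} [CommRing R] [LieRing L] [LieAlgebra R L]

theorem derived_toSubmodule_eq_span_image2 {s : Set L} (hs : span R s = ⊤) :
    (⁅(⊤ : LieIdeal R L), ⊤⁆ : LieIdeal R L).toSubmodule = span R (Set.image2 (⁅·, ·⁆) s s) := by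
  have h := map₂_span_span R (LinearMap.mk₂ R (⁅·, ·⁆) add_lie smul_lie lie_add lie_smul) s s
  rw [hs, map₂_eq_span_image2] at h
  rw [LieSubmodule.lieIdeal_oper_eq_linear_span']
  simpa [Set.image2] using h

theorem derived_toSubmodule_eq_span_of_lie_cyclic {x : Fin 3 → L}
    (hspan : span R (Set.range x) = ⊤) (a : Fin 3 → R)
    (hx : ∀ i, ⁅x i, x (i + 1)⁆ = a (i + 2) • x (i + 2)) :
    (⁅(⊤ : LieIdeal R L), ⊤⁆ : LieIdeal R L).toSubmodule =
      span R (Set.range fun i => a i • x i) := by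
  have cyc : ∀ i : Fin 3, i + 2 + 1 = i ∧ i + 1 + 1 = i + 2 ∧ i + 1 + 2 = i := by decide
  rw [derived_toSubmodule_eq_span_image2 hspan]
  apply le_antisymm
  · have hmem : ∀ k, ⁅x k, x (k + 1)⁆ ∈ span R (Set.range fun i => a i • x i) :=
      fun k => hx k ▸ subset_span ⟨k + 2, rfl⟩
    rw [span_le]
    rintro _ ⟨_, ⟨i, rfl⟩, _, ⟨j, rfl⟩, rfl⟩
    obtain rfl | rfl | rfl : j = i ∨ j = i + 1 ∨ j = i + 2 := by revert i j; decide
    · simp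
    · exact hmem i
    · show ⁅x i, x (i + 2)⁆ ∈ _
      rw [← lie_skew]
      have h := hmem (i + 2)
      rw [(cyc i).1] at h
      exact neg_mem h
  · rw [span_le]
    rintro _ ⟨k, rfl⟩
    have hk := hx (k + 1)
    rw [(cyc k).2.1, (cyc k).2.2] at hk
    show a k • x k ∈ _
    rw [← hk]
    exact subset_span ⟨x (k + 1), ⟨k + 1, rfl⟩, x (k + 2), ⟨k + 2, rfl⟩, rfl⟩

end LieAlgebra

noncomputable def PadicInt.quotientSpanEquivZModPow {p : ℕ} [Fact p.Prime] {a : ℤ_[p]}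
    (ha : a ≠ 0) : (ℤ_[p] ⧸ Ideal.span {a}) ≃+* ZMod (p ^ a.valuation) :=
  (Ideal.quotEquivOfEq (by
    rw [ker_toZModPow, Ideal.span_singleton_eq_span_singleton]
    exact Associated.symm ⟨unitCoeff ha, by rw [mul_comm]; exact (unitCoeff_spec ha).symm⟩)).trans
    (RingHom.quotientKerEquivOfSurjective (ZMod.ringHom_surjective (toZModPow _)))

def AddEquiv.piFinThree (M : Fin 3 → Type*) [∀ i, AddCommMonoid (M i)] :
    (Π i, M i) ≃+ M 0 × M 1 × M 2 :=
  ((Fin.consLinearEquiv ℕ M).symm.trans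
    (LinearEquiv.prodCongr (LinearEquiv.refl ℕ _) (LinearEquiv.piFinTwo ℕ _))).toAddEquiv

theorem stmt7_general (p : ℕ) [Fact p.Prime]
    (L : Type*) [LieRing L] [LieAlgebra ℤ_[p] L]
    (x : Module.Basis (Fin 3) ℤ_[p] L) (a : Fin 3 → ℤ_[p]) (ha : ∀ i, a i ≠ 0)
    (hx : ∀ i : Fin 3, ⁅x i, x (i + 1)⁆ = a (i + 2) • x (i + 2))
    (s : Fin 3 → ℕ) (hs : ∀ i, (s i : ℤ) = (a i).valuation) :
    Nonempty ((L ⧸ (⁅(⊤ : LieIdeal ℤ_[p] L), (⊤ : LieIdeal ℤ_[p] L)⁆ : LieIdeal ℤ_[p] L)) ≃+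
      (ZMod (p ^ (s 0)) × ZMod (p ^ (s 1)) × ZMod (p ^ (s 2)))) := by
  obtain rfl : s = fun i => (a i).valuation := funext fun i => by exact_mod_cast hs i
  have hderived := LieAlgebra.derived_toSubmodule_eq_span_of_lie_cyclic x.span_eq a hx
  let toPi := (quotEquivOfEq _ _ hderived).trans (x.quotientSpanRangeSmulEquivPi a)
  let piZMod := AddEquiv.piCongrRight fun i => (PadicInt.quotientSpanEquivZModPow (ha i)).toAddEquiv
  exact ⟨toPi.toAddEquiv.trans (piZMod.trans (AddEquiv.piFinThree _))⟩

/-- for a 3-dimensional unsolvable `ℤ_[p]`-Lie lattice with a well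
diagonalizing basis (structure constants `a i` with ordered valuations `s i`),
the abelianization is `ℤ/p^{s0}ℤ ⊕ ℤ/p^{s1}ℤ ⊕ ℤ/p^{s2}ℤ`. -/
theorem stmt7 (p : ℕ) [Fact p.Prime]
    (L : Type*) [LieRing L] [LieAlgebra ℤ_[p] L]
    (hus : ¬ LieAlgebra.IsSolvable L)
    (x : Module.Basis (Fin 3) ℤ_[p] L) (a : Fin 3 → ℤ_[p]) (ha : ∀ i, a i ≠ 0)
    (hx : ∀ i : Fin 3, ⁅x i, x (i + 1)⁆ = a (i + 2) • x (i + 2))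
    (s : Fin 3 → ℕ) (hs : ∀ i, (s i : ℤ) = (a i).valuation)
    (hord : (a 0).valuation ≤ (a 1).valuation ∧ (a 1).valuation ≤ (a 2).valuation) :
    Nonempty ((L ⧸ (⁅(⊤ : LieIdeal ℤ_[p] L), (⊤ : LieIdeal ℤ_[p] L)⁆ : LieIdeal ℤ_[p] L)) ≃+
      (ZMod (p ^ (s 0)) × ZMod (p ^ (s 1)) × ZMod (p ^ (s 2)))) :=
  stmt7_general p L x a ha hx s hs
end

section
/- Let p be a prime, M a 3-dimensional Z_p-Lie lattice with a well diagonalizing basis (w0,w1,w2) satisfying [w_i,w_{i+1}] = c_{i+2} w_{i+2} (indices mod 3) where t_i = v_p(c_i) satisfy 0 ≤ t0 ≤ t1 ≤ t2. Then [M,M] = ⟨p^{t0}w0, p^{t1}w1, p^{t2}w2⟩ and γ_2(M) := [M,[M,M]] satisfies γ_2(M) = ⟨p^{t0+t1}w0, p^{t0+t1}w1, p^{t0+t2}w2⟩. -/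
/-!
Both ideals are spanned by brackets of spanning sets: `[M,M]` by the `⁅w i, w j⁆ = ±c_k w_k`, and
`γ₂(M) = [M,[M,M]]` by the `⁅w i, c_k w_k⁆ = ±c_j c_k w_j` with `j ≠ k`. Over `ℤ_[p]` each `c_i`
is a unit times `p ^ t_i`, so these generators may be replaced by `p ^ t_i w_i` and
`p ^ (t_j + t_k) w_j`. For fixed `j` the two generators `p ^ (t_j + t_k) w_j` are comparable, so
only the exponent `t_j + min_{k ≠ j} t_k` survives, and `t 0 ≤ t 1 ≤ t 2` evaluates these minima.
-/

open Submodule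

theorem LieIdeal.lie_toSubmodule_eq_span_image2 {R L : Type*} [CommRing R] [LieRing L]
    [LieAlgebra R L] {I J : LieIdeal R L} {s u : Set L} (hI : (I : Submodule R L) = span R s)
    (hJ : (J : Submodule R L) = span R u) :
    ((⁅I, J⁆ : LieIdeal R L) : Submodule R L) = span R (Set.image2 (⁅·, ·⁆) s u) := by
  simp only [LieIdeal.toLieSubalgebra_toSubmodule] at hI hJ ⊢
  let f : L →ₗ[R] L →ₗ[R] L := LieModule.toEnd R L L
  have hf : map₂ f (span R s) (span R u) = span R (Set.image2 (⁅·, ·⁆) s u) :=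
    map₂_span_span R f s u
  rw [← hf, ← hI, ← hJ, map₂_eq_span_image2, LieSubmodule.lieIdeal_oper_eq_linear_span']
  rfl

theorem LieIdeal.top_toSubmodule_eq_span {R L ι : Type*} [CommRing R] [LieRing L]
    [LieAlgebra R L] {w : ι → L} (hspan : span R (Set.range w) = ⊤) :
    ((⊤ : LieIdeal R L) : Submodule R L) = span R (Set.range w) := by
  rw [hspan, LieIdeal.toLieSubalgebra_toSubmodule, LieSubmodule.top_toSubmodule]

theorem PadicInt.associated_pow_valuation {p : ℕ} [Fact p.Prime] {x : ℤ_[p]} (hx : x ≠ 0) :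
    Associated ((p : ℤ_[p]) ^ x.valuation) x :=
  ⟨unitCoeff hx, by rw [mul_comm]; exact (unitCoeff_spec hx).symm⟩

theorem Set.range_fin_three {α : Type*} (f : Fin 3 → α) : Set.range f = {f 0, f 1, f 2} := by
  ext; simp [Fin.exists_fin_succ, eq_comm]

namespace Submodule

variable {R M ι : Type*} [CommRing R] [AddCommGroup M] [Module R M]

theorem span_range_smul_le_of_dvd {a b : ι → R} (v : ι → M) (h : ∀ i, a i ∣ b i) :
    span R (Set.range fun i ↦ b i • v i) ≤ span R (Set.range fun i ↦ a i • v i) := by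
  rw [span_le, Set.range_subset_iff]
  intro i
  obtain ⟨d, hd⟩ := h i
  rw [hd, mul_comm, mul_smul]
  exact smul_mem _ d (subset_span ⟨i, rfl⟩)

theorem span_range_smul_eq_of_associated {a b : ι → R} (v : ι → M)
    (h : ∀ i, Associated (a i) (b i)) :
    span R (Set.range fun i ↦ a i • v i) = span R (Set.range fun i ↦ b i • v i) :=
  le_antisymm (span_range_smul_le_of_dvd v fun i ↦ (h i).symm.dvd)
    (span_range_smul_le_of_dvd v fun i ↦ (h i).dvd)

theorem span_range_pow_smul_sup (r : R) (e f : ι → ℕ) (v : ι → M) :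
    span R (Set.range fun i ↦ r ^ e i • v i) ⊔ span R (Set.range fun i ↦ r ^ f i • v i) =
      span R (Set.range fun i ↦ r ^ min (e i) (f i) • v i) := by
  refine le_antisymm (sup_le ?_ ?_) ?_
  · exact span_range_smul_le_of_dvd v fun i ↦ pow_dvd_pow r (min_le_left _ _)
  · exact span_range_smul_le_of_dvd v fun i ↦ pow_dvd_pow r (min_le_right _ _)
  · rw [span_le, Set.range_subset_iff]
    intro i
    rcases min_choice (e i) (f i) with h | h <;> rw [h]
    · exact mem_sup_left (subset_span ⟨i, rfl⟩)
    · exact mem_sup_right (subset_span ⟨i, rfl⟩)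

end Submodule

theorem Fin.add_one_add_one_eq_add_two (i : Fin 3) : i + 1 + 1 = i + 2 := by revert i; decide

theorem Fin.add_one_add_two_eq_self (i : Fin 3) : i + 1 + 2 = i := by revert i; decide

theorem Fin.add_two_add_two_eq_add_one (i : Fin 3) : i + 2 + 2 = i + 1 := by revert i; decide

theorem Fin.eq_or_eq_add_one_or_eq_add_two (i j : Fin 3) : j = i ∨ j = i + 1 ∨ j = i + 2 := by
  revert i j; decide

section CyclicBracket

variable {R M : Type*} [CommRing R] [LieRing M] [LieAlgebra R M]

def IsCyclicBracket (w : Fin 3 → M) (c : Fin 3 → R) : Prop :=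
  ∀ i, ⁅w i, w (i + 1)⁆ = c (i + 2) • w (i + 2)

namespace IsCyclicBracket

variable {w : Fin 3 → M} {c : Fin 3 → R}

theorem lie_add_one_add_two (hw : IsCyclicBracket w c) (i : Fin 3) :
    ⁅w (i + 1), w (i + 2)⁆ = c i • w i := by
  simpa only [Fin.add_one_add_one_eq_add_two, Fin.add_one_add_two_eq_self] using hw (i + 1)

theorem lie_add_two_add_one (hw : IsCyclicBracket w c) (i : Fin 3) :
    ⁅w (i + 2), w (i + 1)⁆ = -(c i • w i) := by
  rw [← lie_skew, hw.lie_add_one_add_two]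

theorem lie_add_two (hw : IsCyclicBracket w c) (i : Fin 3) :
    ⁅w i, w (i + 2)⁆ = -(c (i + 1) • w (i + 1)) := by
  simpa only [Fin.add_one_add_one_eq_add_two, Fin.add_one_add_two_eq_self]
    using hw.lie_add_two_add_one (i + 1)

theorem lie_top_top_eq_span (hw : IsCyclicBracket w c)
    (hspan : span R (Set.range w) = ⊤) :
    ((⁅(⊤ : LieIdeal R M), ⊤⁆ : LieIdeal R M) : Submodule R M) =
      span R (Set.range fun k ↦ c k • w k) := by
  have htop := LieIdeal.top_toSubmodule_eq_span hspan
  rw [LieIdeal.lie_toSubmodule_eq_span_image2 htop htop]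
  apply le_antisymm
  · rw [span_le]
    rintro _ ⟨_, ⟨i, rfl⟩, _, ⟨j, rfl⟩, rfl⟩
    dsimp only
    rcases Fin.eq_or_eq_add_one_or_eq_add_two i j with rfl | rfl | rfl
    · simp
    · rw [hw i]
      exact subset_span ⟨_, rfl⟩
    · rw [hw.lie_add_two i]
      exact neg_mem (subset_span ⟨_, rfl⟩)
  · rw [span_le, Set.range_subset_iff]
    intro k
    rw [← hw.lie_add_one_add_two k]
    exact subset_span (Set.mem_image2_of_mem ⟨_, rfl⟩ ⟨_, rfl⟩)

theorem lie_top_lie_top_top_eq_sup (hw : IsCyclicBracket w c)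
    (hspan : span R (Set.range w) = ⊤) :
    ((⁅(⊤ : LieIdeal R M), ⁅(⊤ : LieIdeal R M), ⊤⁆⁆ : LieIdeal R M) : Submodule R M) =
      span R (Set.range fun j ↦ (c j * c (j + 1)) • w j) ⊔
        span R (Set.range fun j ↦ (c j * c (j + 2)) • w j) := by
  rw [LieIdeal.lie_toSubmodule_eq_span_image2 (LieIdeal.top_toSubmodule_eq_span hspan)
    (hw.lie_top_top_eq_span hspan), ← span_union]
  apply span_eq_span
  · rintro _ ⟨_, ⟨i, rfl⟩, _, ⟨k, rfl⟩, rfl⟩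
    dsimp only
    rcases Fin.eq_or_eq_add_one_or_eq_add_two i k with rfl | rfl | rfl
    · simp
    · have h : ⁅w i, c (i + 1) • w (i + 1)⁆ = (c (i + 2) * c (i + 2 + 2)) • w (i + 2) := by
        rw [lie_smul, hw i, smul_smul, Fin.add_two_add_two_eq_add_one, mul_comm]
      rw [h]
      exact subset_span (Or.inr ⟨_, rfl⟩)
    · have h : ⁅w i, c (i + 2) • w (i + 2)⁆ = -((c (i + 1) * c (i + 1 + 1)) • w (i + 1)) := by
        rw [lie_smul, hw.lie_add_two i, smul_neg, smul_smul, Fin.add_one_add_one_eq_add_two,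
          mul_comm]
      rw [h]
      exact neg_mem (subset_span (Or.inl ⟨_, rfl⟩))
  · rintro _ (⟨j, rfl⟩ | ⟨j, rfl⟩) <;> dsimp only
    · have h : (c j * c (j + 1)) • w j = -⁅w (j + 2), c (j + 1) • w (j + 1)⁆ := by
        rw [lie_smul, hw.lie_add_two_add_one, smul_neg, neg_neg, smul_smul, mul_comm]
      rw [h]
      exact neg_mem (subset_span (Set.mem_image2_of_mem ⟨_, rfl⟩ ⟨_, rfl⟩))
    · have h : (c j * c (j + 2)) • w j = ⁅w (j + 1), c (j + 2) • w (j + 2)⁆ := by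
        rw [lie_smul, hw.lie_add_one_add_two, smul_smul, mul_comm]
      rw [h]
      exact subset_span (Set.mem_image2_of_mem ⟨_, rfl⟩ ⟨_, rfl⟩)

end IsCyclicBracket

end CyclicBracket

/-- for a 3-dimensional `ℤ_[p]`-Lie lattice `M` with well diagonalizing basis
`(w0,w1,w2)`, `[M,M] = ⟨p^{t0}w0, p^{t1}w1, p^{t2}w2⟩` and
`γ₂(M) = [M,[M,M]] = ⟨p^{t0+t1}w0, p^{t0+t1}w1, p^{t0+t2}w2⟩`. -/
theorem stmt13 (p : ℕ) [Fact p.Prime]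
    (M : Type*) [LieRing M] [LieAlgebra ℤ_[p] M]
    (w : Module.Basis (Fin 3) ℤ_[p] M) (c : Fin 3 → ℤ_[p]) (hc : ∀ i, c i ≠ 0)
    (hw : ∀ i : Fin 3, ⁅w i, w (i + 1)⁆ = c (i + 2) • w (i + 2))
    (t : Fin 3 → ℕ) (ht : ∀ i, (t i : ℤ) = (c i).valuation)
    (hord : t 0 ≤ t 1 ∧ t 1 ≤ t 2) :
    ((⁅(⊤ : LieIdeal ℤ_[p] M), (⊤ : LieIdeal ℤ_[p] M)⁆ : LieIdeal ℤ_[p] M) :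
        Submodule ℤ_[p] M) =
      Submodule.span ℤ_[p]
        {((p : ℤ_[p]) ^ (t 0)) • w 0, ((p : ℤ_[p]) ^ (t 1)) • w 1, ((p : ℤ_[p]) ^ (t 2)) • w 2} ∧
    ((⁅(⊤ : LieIdeal ℤ_[p] M),
        (⁅(⊤ : LieIdeal ℤ_[p] M), (⊤ : LieIdeal ℤ_[p] M)⁆ : LieIdeal ℤ_[p] M)⁆ :
        LieIdeal ℤ_[p] M) : Submodule ℤ_[p] M) =
      Submodule.span ℤ_[p]
        {((p : ℤ_[p]) ^ (t 0 + t 1)) • w 0, ((p : ℤ_[p]) ^ (t 0 + t 1)) • w 1,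
         ((p : ℤ_[p]) ^ (t 0 + t 2)) • w 2} := by
  have hcyc : IsCyclicBracket w c := hw
  have hassoc (i : Fin 3) : Associated ((p : ℤ_[p]) ^ t i) (c i) := by
    rw [show t i = (c i).valuation by exact_mod_cast ht i]
    exact PadicInt.associated_pow_valuation (hc i)
  have hassoc₂ (i j : Fin 3) : Associated ((p : ℤ_[p]) ^ (t i + t j)) (c i * c j) := by
    rw [pow_add]; exact (hassoc i).mul_mul (hassoc j)
  have hmin (j : Fin 3) :
      min (t j + t (j + 1)) (t j + t (j + 2)) = ![t 0 + t 1, t 0 + t 1, t 0 + t 2] j := by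
    fin_cases j <;> simp <;> omega
  refine ⟨?_, ?_⟩
  · rw [hcyc.lie_top_top_eq_span w.span_eq, ← span_range_smul_eq_of_associated _ hassoc,
      Set.range_fin_three]
  · rw [hcyc.lie_top_lie_top_top_eq_sup w.span_eq,
      ← span_range_smul_eq_of_associated _ fun j ↦ hassoc₂ j (j + 1),
      ← span_range_smul_eq_of_associated _ fun j ↦ hassoc₂ j (j + 2),
      span_range_pow_smul_sup]
    simp only [hmin]
    rw [Set.range_fin_three]
    rfl
end

section
/- Let s0 ≤ s1 ≤ s2 and k0, k1, k2 be naturals with k = k0+k1+k2, s0+2k1 ≤ s1 and s1+2k2 ≤ s2, and put t_i = s_i + k − 2k_i, r0 = s0+s1+k1+2k2, r1 = s0+k1+k2. Then r1+t0 ≤ r0, r1+t0 ≤ t0+t1, t0+t1 ≤ r0, t0+t1 ≤ r1+t1, r0 ≤ r1+t2, and r0 ≤ t0+t2. Consequently, for a lattice M with well diagonalizing basis (w0,w1,w2) and s-invariants t0 < t1 < t2, the submodule p^{r0}M + p^{r1}[M,M] + γ_2(M) equals ⟨p^{r1+t0}w0, p^{t0+t1}w1, p^{r0}w2⟩. -/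
open Pointwise

/-- the inequalities `r1+t0 ≤ r0`, `r1+t0 ≤ t0+t1`, `t0+t1 ≤ r0`,
`t0+t1 ≤ r1+t1`, `r0 ≤ r1+t2`, `r0 ≤ t0+t2`; consequently
`p^{r0}M + p^{r1}[M,M] + γ₂(M) = ⟨p^{r1+t0}w0, p^{t0+t1}w1, p^{r0}w2⟩`. -/
theorem stmt14 (p : ℕ) [Fact p.Prime]
    (s : Fin 3 → ℕ) (h01 : s 0 ≤ s 1) (h12 : s 1 ≤ s 2)
    (kv : Fin 3 → ℕ) (k : ℕ) (hk : k = kv 0 + kv 1 + kv 2)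
    (hk1 : s 0 + 2 * kv 1 ≤ s 1) (hk2 : s 1 + 2 * kv 2 ≤ s 2)
    (t : Fin 3 → ℕ) (ht : ∀ i, (t i : ℤ) = (s i : ℤ) + k - 2 * kv i)
    (r0 r1 : ℕ) (hr0 : r0 = s 0 + s 1 + kv 1 + 2 * kv 2) (hr1 : r1 = s 0 + kv 1 + kv 2)
    -- the Lie lattice M with a well diagonalizing basis having s-invariants t0 < t1 < t2
    (M : Type*) [LieRing M] [LieAlgebra ℤ_[p] M]
    (w : Module.Basis (Fin 3) ℤ_[p] M) (c : Fin 3 → ℤ_[p]) (hc : ∀ i, c i ≠ 0)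
    (hw : ∀ i : Fin 3, ⁅w i, w (i + 1)⁆ = c (i + 2) • w (i + 2))
    (hval : ∀ i, ((t i : ℤ)) = (c i).valuation)
    (htord : t 0 < t 1 ∧ t 1 < t 2)
    (Der γ₂ : Submodule ℤ_[p] M)
    (hDer : Der = Submodule.span ℤ_[p]
      {((p : ℤ_[p]) ^ (t 0)) • w 0, ((p : ℤ_[p]) ^ (t 1)) • w 1, ((p : ℤ_[p]) ^ (t 2)) • w 2})
    (hγ : γ₂ = Submodule.span ℤ_[p]
      {((p : ℤ_[p]) ^ (t 0 + t 1)) • w 0, ((p : ℤ_[p]) ^ (t 0 + t 1)) • w 1,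
       ((p : ℤ_[p]) ^ (t 0 + t 2)) • w 2}) :
    (r1 + t 0 ≤ r0 ∧ r1 + t 0 ≤ t 0 + t 1 ∧ t 0 + t 1 ≤ r0 ∧
     t 0 + t 1 ≤ r1 + t 1 ∧ r0 ≤ r1 + t 2 ∧ r0 ≤ t 0 + t 2) ∧
    ((p : ℤ_[p]) ^ r0 • (⊤ : Submodule ℤ_[p] M) ⊔ (p : ℤ_[p]) ^ r1 • Der ⊔ γ₂ =
      Submodule.span ℤ_[p]
        {((p : ℤ_[p]) ^ (r1 + t 0)) • w 0, ((p : ℤ_[p]) ^ (t 0 + t 1)) • w 1,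
         ((p : ℤ_[p]) ^ r0) • w 2}) := by
  have h0 := ht 0; have h1 := ht 1; have h2 := ht 2
  have i1 : r1 + t 0 ≤ r0 := by omega
  have i2 : r1 + t 0 ≤ t 0 + t 1 := by omega
  have i3 : t 0 + t 1 ≤ r0 := by omega
  have i4 : t 0 + t 1 ≤ r1 + t 1 := by omega
  have i5 : r0 ≤ r1 + t 2 := by omega
  have i6 : r0 ≤ t 0 + t 2 := by omega
  refine ⟨⟨i1, i2, i3, i4, i5, i6⟩, ?_⟩
  have key : ∀ (a b : ℕ) (v : M) (S : Set M), b ≤ a → ((p:ℤ_[p])^b) • v ∈ S →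
      ((p:ℤ_[p])^a) • v ∈ Submodule.span ℤ_[p] S := by
    intro a b v S hba hmem
    have : ((p:ℤ_[p])^a) • v = ((p:ℤ_[p])^(a-b)) • (((p:ℤ_[p])^b) • v) := by
      rw [smul_smul, ← pow_add, Nat.sub_add_cancel hba]
    rw [this]
    exact Submodule.smul_mem _ _ (Submodule.subset_span hmem)
  have hT : (⊤ : Submodule ℤ_[p] M) = Submodule.span ℤ_[p] ({w 0, w 1, w 2} : Set M) := by
    refine le_antisymm ?_ le_top
    rw [← w.span_eq]
    refine Submodule.span_le.mpr ?_
    rintro x ⟨i, rfl⟩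
    fin_cases i <;> exact Submodule.subset_span (by simp)
  have hsm : ∀ (a : ℕ) (x y z : M), (((p:ℤ_[p])^a)) • Submodule.span ℤ_[p] ({x, y, z} : Set M)
      = Submodule.span ℤ_[p] ({((p:ℤ_[p])^a) • x, ((p:ℤ_[p])^a) • y, ((p:ℤ_[p])^a) • z} : Set M) := by
    intro a x y z
    rw [Submodule.smul_span]
    congr 1
    simp [Set.smul_set_insert, Set.smul_set_singleton]
  rw [hT, hDer, hγ, hsm, hsm]
  simp only [smul_smul, ← pow_add]
  refine le_antisymm ?_ ?_
  · refine sup_le (sup_le ?_ ?_) ?_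
    · refine Submodule.span_le.mpr ?_
      intro x hx
      simp only [Set.mem_insert_iff, Set.mem_singleton_iff] at hx
      rcases hx with rfl | rfl | rfl
      · exact key r0 (r1 + t 0) (w 0) _ i1 (by simp)
      · exact key r0 (t 0 + t 1) (w 1) _ i3 (by simp)
      · exact key r0 r0 (w 2) _ le_rfl (by simp)
    · refine Submodule.span_le.mpr ?_
      intro x hx
      simp only [Set.mem_insert_iff, Set.mem_singleton_iff] at hx
      rcases hx with rfl | rfl | rfl
      · exact key (r1 + t 0) (r1 + t 0) (w 0) _ le_rfl (by simp)
      · exact key (r1 + t 1) (t 0 + t 1) (w 1) _ i4 (by simp)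
      · exact key (r1 + t 2) r0 (w 2) _ i5 (by simp)
    · refine Submodule.span_le.mpr ?_
      intro x hx
      simp only [Set.mem_insert_iff, Set.mem_singleton_iff] at hx
      rcases hx with rfl | rfl | rfl
      · exact key (t 0 + t 1) (r1 + t 0) (w 0) _ i2 (by simp)
      · exact key (t 0 + t 1) (t 0 + t 1) (w 1) _ le_rfl (by simp)
      · exact key (t 0 + t 2) r0 (w 2) _ i6 (by simp)
  · refine Submodule.span_le.mpr ?_
    intro x hx
    simp only [Set.mem_insert_iff, Set.mem_singleton_iff] at hx
    rcases hx with rfl | rfl | rfl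
    · exact Submodule.mem_sup_left (Submodule.mem_sup_right (Submodule.subset_span (by simp)))
    · exact Submodule.mem_sup_right (Submodule.subset_span (by simp))
    · exact Submodule.mem_sup_left (Submodule.mem_sup_left (Submodule.subset_span (by simp)))
end
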